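/- Let (V,d) be a finite metric space, let t ≥ 1 be an integer, and let F, F* ⊆ V be nonempty sets with |F| = |F*| = k. Suppose F is t-swap locally optimal for the k-median objective, i.e., for every R ⊆ F and every A ⊆ V with |R| = |A| ≤ t we have kmed((F \ R) ∪ A) ≥ kmed(F). Then kmed(F) ≤ (3 + 2/t) · kmed(F*). -/
import Mathlib

open Finset

noncomputable def distSet {V : Type*} [MetricSpace V] (j : V) (F : Finset V)
    (hF : F.Nonempty) : ℝ :=
  F.inf' hF fun f => dist j f

noncomputable def kmed {V : Type*} [MetricSpace V] [Fintype V] (F : Finset V)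
    (hF : F.Nonempty) : ℝ :=
  ∑ j : V, distSet j F hF

section Aux
set_option linter.unusedSectionVars false
variable {V : Type*} [MetricSpace V] [Fintype V] [DecidableEq V]

lemma distSet_nonneg (j : V) (F : Finset V) (hF : F.Nonempty) : 0 ≤ distSet j F hF := by
  obtain ⟨f, hf, he⟩ := F.exists_mem_eq_inf' hF (fun f => dist j f)
  rw [distSet, he]; exact dist_nonneg

lemma distSet_le (j f : V) (F : Finset V) (hF : F.Nonempty) (hf : f ∈ F) :
    distSet j F hF ≤ dist j f := Finset.inf'_le _ hf

lemma kmed_le_assign (F' : Finset V) (hF' : F'.Nonempty) (a : V → V) (ha : ∀ j, a j ∈ F') :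
    kmed F' hF' ≤ ∑ j : V, dist j (a j) :=
  Finset.sum_le_sum fun j _ => distSet_le j (a j) F' hF' (ha j)

/-- Counting subsets of size r+1 containing a fixed element. -/
lemma count_powersetCard_mem (s : Finset V) (u : V) (hu : u ∈ s) (r : ℕ) :
    (((s.powersetCard (r + 1)).filter (fun P => u ∈ P)).card) = (s.card - 1).choose r := by
  have : ((s.powersetCard (r + 1)).filter (fun P => u ∈ P)).card
      = ((s.erase u).powersetCard r).card := by
    apply Finset.card_bij (fun P _ => P.erase u)
    · intro P hP
      simp only [mem_filter, mem_powersetCard] at hP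
      rw [mem_powersetCard]
      refine ⟨fun x hx => ?_, ?_⟩
      · rw [mem_erase] at hx ⊢
        exact ⟨hx.1, hP.1.1 hx.2⟩
      · rw [Finset.card_erase_of_mem hP.2, hP.1.2]
        rfl
    · intro P hP Q hQ h
      simp only [mem_filter] at hP hQ
      rw [← Finset.insert_erase hP.2, ← Finset.insert_erase hQ.2, h]
    · intro Q hQ
      rw [mem_powersetCard] at hQ
      have huQ : u ∉ Q := fun h => (Finset.mem_erase.1 (hQ.1 h)).1 rfl
      refine ⟨insert u Q, ?_, ?_⟩
      · simp only [mem_filter, mem_powersetCard]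
        exact ⟨⟨Finset.insert_subset hu (hQ.1.trans (Finset.erase_subset _ _)),
          by rw [Finset.card_insert_of_notMem huQ, hQ.2]⟩, Finset.mem_insert_self _ _⟩
      · rw [Finset.erase_insert huQ]
  rw [this, Finset.card_powersetCard, Finset.card_erase_of_mem hu]
/-- The key inequality extracted from local optimality of one swap `(R, A)`:
clients with `σ* j ∈ A` go to `σ* j`; clients losing their facility reroute via `η (σ* j)`. -/
lemma swap_key (F Fstar : Finset V) (hF : F.Nonempty) (hFstar : Fstar.Nonempty)
    (σ σs η : V → V)
    (hσF : ∀ j, σ j ∈ F) (hσd : ∀ j, dist j (σ j) = distSet j F hF)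
    (hσsF : ∀ j, σs j ∈ Fstar) (hσsd : ∀ j, dist j (σs j) = distSet j Fstar hFstar)
    (hηF : ∀ x, η x ∈ F) (hηmin : ∀ x, ∀ f ∈ F, dist x (η x) ≤ dist x f)
    (R A : Finset V)
    (hprop : ∀ g ∈ Fstar, η g ∈ R → g ∈ A)
    (hlo : ∀ hne : ((F \ R) ∪ A).Nonempty, kmed ((F \ R) ∪ A) hne ≥ kmed F hF) :
    0 ≤ ∑ j : V, ((if σs j ∈ A then distSet j Fstar hFstar - distSet j F hF else 0)
        + (if σ j ∈ R then 2 * distSet j Fstar hFstar else 0)) := by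
  rcases A.eq_empty_or_nonempty with hAe | hAne
  · apply Finset.sum_nonneg
    intro j _
    subst hAe
    simp only [Finset.notMem_empty, if_false, zero_add]
    have := distSet_nonneg j Fstar hFstar
    split <;> linarith
  · have hne : ((F \ R) ∪ A).Nonempty := hAne.mono Finset.subset_union_right
    have key := hlo hne
    set a : V → V := fun j =>
      if σs j ∈ A then σs j else if σ j ∈ R then η (σs j) else σ j with ha_def
    have haF' : ∀ j, a j ∈ (F \ R) ∪ A := by
      intro j
      rw [ha_def]
      dsimp only
      split_ifs with h1 h2
      · exact Finset.mem_union_right _ h1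
      · apply Finset.mem_union_left
        rw [Finset.mem_sdiff]
        refine ⟨hηF _, fun hc => h1 (hprop _ (hσsF j) hc)⟩
      · exact Finset.mem_union_left _ (Finset.mem_sdiff.2 ⟨hσF j, h2⟩)
    have h1 : kmed F hF ≤ ∑ j : V, dist j (a j) :=
      le_trans key (kmed_le_assign _ hne a haF')
    have h2 : ∀ j : V, dist j (a j) - distSet j F hF ≤
        (if σs j ∈ A then distSet j Fstar hFstar - distSet j F hF else 0)
        + (if σ j ∈ R then 2 * distSet j Fstar hFstar else 0) := by
      intro j
      have hcs : 0 ≤ distSet j Fstar hFstar := distSet_nonneg _ _ _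
      rw [ha_def]
      dsimp only
      split_ifs with hA' hR' hR'
      · rw [hσsd j]; linarith
      · rw [hσsd j]; linarith
      · have e1 : dist j (η (σs j)) ≤ dist j (σs j) + dist (σs j) (η (σs j)) :=
          dist_triangle _ _ _
        have e2 : dist (σs j) (η (σs j)) ≤ dist (σs j) (σ j) :=
          hηmin _ _ (hσF j)
        have e3 : dist (σs j) (σ j) ≤ dist (σs j) j + dist j (σ j) := dist_triangle _ _ _
        rw [dist_comm (σs j) j] at e3
        have e4 := hσsd j
        have e5 := hσd j
        linarith
      · have e5 := hσd j; linarith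
    calc (0:ℝ) = kmed F hF - ∑ j : V, distSet j F hF := by rw [kmed]; ring
    _ ≤ ∑ j : V, dist j (a j) - ∑ j : V, distSet j F hF := by linarith
    _ = ∑ j : V, (dist j (a j) - distSet j F hF) := by rw [Finset.sum_sub_distrib]
    _ ≤ _ := Finset.sum_le_sum fun j _ => h2 j

end Aux
/-- A ratio of binomial coefficients. -/
lemma choose_ratio (Z r : ℕ) (hr : r + 1 ≤ Z) :
    ((Z.choose (r + 1) : ℝ))⁻¹ * ((Z - 1).choose r : ℝ) = ((r : ℝ) + 1) / (Z : ℝ) := by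
  obtain ⟨Z', rfl⟩ : ∃ Z', Z = Z' + 1 :=
    ⟨Z - 1, (Nat.succ_pred_eq_of_pos (lt_of_lt_of_le (Nat.succ_pos r) hr)).symm⟩
  have hid := Nat.add_one_mul_choose_eq Z' r
  have hpos : 0 < (Z' + 1).choose (r + 1) := Nat.choose_pos hr
  have hidR : ((Z' : ℝ) + 1) * ((Z'.choose r : ℕ) : ℝ)
      = (((Z' + 1).choose (r + 1) : ℕ) : ℝ) * ((r : ℝ) + 1) := by
    exact_mod_cast congrArg (fun n : ℕ => (n : ℝ)) hid
  have hcne : (((Z' + 1).choose (r + 1) : ℕ) : ℝ) ≠ 0 := by positivity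
  have hsimp : (Z' + 1 - 1 : ℕ) = Z' := rfl
  rw [hsimp]
  have hZne : ((Z' : ℝ) + 1) ≠ 0 := by positivity
  rw [eq_div_iff (by push_cast; exact hZne)]
  push_cast
  field_simp
  linarith [hidR]
set_option maxHeartbeats 1600000 in
/-- If `F` is `t`-swap locally optimal for the k-median objective, then
`kmed(F) ≤ (3 + 2/t) · kmed(F*)`. -/
theorem kmed_t_swap_local_opt {V : Type*} [MetricSpace V] [Fintype V] [DecidableEq V]
    (t : ℕ) (ht : 1 ≤ t) (k : ℕ)
    (F Fstar : Finset V) (hF : F.Nonempty) (hFstar : Fstar.Nonempty)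
    (hcardF : F.card = k) (hcardFstar : Fstar.card = k)
    (hlocal : ∀ R ⊆ F, ∀ A : Finset V, R.card = A.card → A.card ≤ t →
      ∀ hne : ((F \ R) ∪ A).Nonempty, kmed ((F \ R) ∪ A) hne ≥ kmed F hF) :
    kmed F hF ≤ (3 + 2 / (t : ℝ)) * kmed Fstar hFstar := by
  classical
  -- choice of nearest facilities
  have hex : ∀ j : V, ∃ f, f ∈ F ∧ dist j f = distSet j F hF := fun j => by
    obtain ⟨f, hf, he⟩ := F.exists_mem_eq_inf' hF (fun f => dist j f)
    exact ⟨f, hf, he.symm⟩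
  choose σ hσF hσd using hex
  have hexs : ∀ j : V, ∃ f, f ∈ Fstar ∧ dist j f = distSet j Fstar hFstar := fun j => by
    obtain ⟨f, hf, he⟩ := Fstar.exists_mem_eq_inf' hFstar (fun f => dist j f)
    exact ⟨f, hf, he.symm⟩
  choose σs hσsF hσsd using hexs
  have hexη : ∀ x : V, ∃ f, f ∈ F ∧ ∀ f' ∈ F, dist x f ≤ dist x f' := fun x => by
    obtain ⟨f, hf, he⟩ := F.exists_mem_eq_inf' hF (fun f => dist x f)
    exact ⟨f, hf, fun f' hf' => by rw [← he]; exact Finset.inf'_le _ hf'⟩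
  choose η hηF hηmin using hexη
  -- fibers and degrees
  set S : V → Finset V := fun f => Fstar.filter (fun g => η g = f) with hS_def
  set D : Finset V := F.filter (fun f => (S f).Nonempty) with hD_def
  set Z : ℕ := (F \ D).card with hZ_def
  have hDF : D ⊆ F := Finset.filter_subset _ _
  have hgS : ∀ g ∈ Fstar, g ∈ S (η g) := fun g hg => by
    simp only [hS_def]; exact Finset.mem_filter.2 ⟨hg, rfl⟩
  have hηD : ∀ g ∈ Fstar, η g ∈ D := fun g hg => by
    simp only [hD_def]; exact Finset.mem_filter.2 ⟨hηF g, ⟨g, hgS g hg⟩⟩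
  have hSsub : ∀ f : V, S f ⊆ Fstar := fun f => Finset.filter_subset _ _
  have hm1 : ∀ f ∈ D, 1 ≤ (S f).card := by
    intro f hf
    simp only [hD_def] at hf
    exact Finset.card_pos.2 (Finset.mem_filter.1 hf).2
  -- counting facts
  have hsum_m : ∑ f ∈ D, (S f).card = k := by
    simp only [hS_def]
    rw [← hcardFstar]
    exact (Finset.card_eq_sum_card_fiberwise hηD).symm
  have hZsum : ∑ f ∈ D, ((S f).card - 1) = Z := by
    have h1 : ∑ f ∈ D, ((S f).card - 1 + 1) = ∑ f ∈ D, (S f).card :=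
      Finset.sum_congr rfl fun f hf => Nat.succ_pred_eq_of_pos (hm1 f hf)
    have h2 : ∑ f ∈ D, ((S f).card - 1) + D.card = k := by
      rw [← hsum_m, ← h1, Finset.sum_add_distrib, Finset.sum_const, smul_eq_mul, mul_one]
    have h3 : Z + D.card = k := by
      rw [hZ_def, Finset.card_sdiff_of_subset hDF]
      rw [← hcardF]
      exact Nat.sub_add_cancel (Finset.card_le_card hDF)
    omega
  have hmZ : ∀ f ∈ D, (S f).card - 1 ≤ Z := by
    intro f hf
    rw [← hZsum]
    exact Finset.single_le_sum (f := fun f => (S f).card - 1) (fun g _ => Nat.zero_le _) hf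
  -- per-facility cost functionals
  set α1 : V → ℝ := fun g =>
    ∑ j : V, if σs j = g then distSet j Fstar hFstar - distSet j F hF else 0 with hα1_def
  set β1 : V → ℝ := fun u =>
    ∑ j : V, if σ j = u then 2 * distSet j Fstar hFstar else 0 with hβ1_def
  have hβ1nonneg : ∀ u, 0 ≤ β1 u := by
    intro u
    simp only [hβ1_def]
    apply Finset.sum_nonneg
    intro j _
    have := distSet_nonneg j Fstar hFstar
    split <;> linarith
  have hαdec : ∀ A : Finset V,
      (∑ j : V, if σs j ∈ A then distSet j Fstar hFstar - distSet j F hF else 0)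
      = ∑ g ∈ A, α1 g := by
    intro A
    simp only [hα1_def]
    refine Eq.trans (Finset.sum_congr rfl fun j _ =>
      (Finset.sum_ite_eq A (σs j) (fun _ => distSet j Fstar hFstar - distSet j F hF)).symm) ?_
    exact Finset.sum_comm
  have hβdec : ∀ R : Finset V,
      (∑ j : V, if σ j ∈ R then 2 * distSet j Fstar hFstar else 0)
      = ∑ u ∈ R, β1 u := by
    intro R
    simp only [hβ1_def]
    refine Eq.trans (Finset.sum_congr rfl fun j _ =>
      (Finset.sum_ite_eq R (σ j) (fun _ => 2 * distSet j Fstar hFstar)).symm) ?_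
    exact Finset.sum_comm
  have hswapαβ : ∀ R A : Finset V, R ⊆ F → R.card = A.card → A.card ≤ t →
      (∀ g ∈ Fstar, η g ∈ R → g ∈ A) →
      0 ≤ (∑ g ∈ A, α1 g) + ∑ u ∈ R, β1 u := by
    intro R A hRF hcard hAt hprop
    have := swap_key F Fstar hF hFstar σ σs η hσF hσd hσsF hσsd hηF hηmin R A hprop
      (fun hne => hlocal R hRF A hcard hAt hne)
    rwa [Finset.sum_add_distrib, hαdec, hβdec] at this
  have hαtot : ∑ g ∈ Fstar, α1 g = kmed Fstar hFstar - kmed F hF := by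
    rw [← hαdec Fstar, kmed, kmed, ← Finset.sum_sub_distrib]
    apply Finset.sum_congr rfl
    intro j _
    rw [if_pos (hσsF j)]
  have hβtot : ∑ u ∈ F, β1 u = 2 * kmed Fstar hFstar := by
    rw [← hβdec F, kmed, Finset.mul_sum]
    apply Finset.sum_congr rfl
    intro j _
    rw [if_pos (hσF j)]
  have hfib : ∑ f ∈ D, (∑ g ∈ S f, α1 g) = ∑ g ∈ Fstar, α1 g := by
    simp only [hS_def]
    exact Finset.sum_fiberwise_of_maps_to hηD α1
  -- small and big facilities
  set Ds : Finset V := D.filter (fun f => (S f).card ≤ t) with hDs_def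
  set Db : Finset V := D.filter (fun f => ¬ (S f).card ≤ t) with hDb_def
  have hDsD : Ds ⊆ D := Finset.filter_subset _ _
  have hDbD : Db ⊆ D := Finset.filter_subset _ _
  set w : V → ℝ := fun f => ((Z.choose ((S f).card - 1) : ℕ) : ℝ)⁻¹ with hw_def
  have hNne : ∀ f ∈ D, ((Z.choose ((S f).card - 1) : ℕ) : ℝ) ≠ 0 := by
    intro f hf
    have := Nat.choose_pos (hmZ f hf)
    positivity
  have hZcard : (F \ D).card = Z := rfl
  -- the master quantity
  set T : ℝ := (∑ f ∈ Ds, w f * ∑ P ∈ (F \ D).powersetCard ((S f).card - 1),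
        ((∑ g ∈ S f, α1 g) + ∑ u ∈ insert f P, β1 u))
      + (Z : ℝ)⁻¹ * ∑ f ∈ Db, ∑ f' ∈ F \ D, ∑ g ∈ S f, (α1 g + β1 f') with hT_def
  have hTnonneg : 0 ≤ T := by
    rw [hT_def]
    apply add_nonneg
    · apply Finset.sum_nonneg
      intro f hf
      rw [hDs_def] at hf
      have hfD : f ∈ D := (Finset.mem_filter.1 hf).1
      apply mul_nonneg
      · rw [hw_def]; positivity
      · apply Finset.sum_nonneg
        intro P hP
        rw [Finset.mem_powersetCard] at hP
        have hfP : f ∉ P := fun hc => (Finset.mem_sdiff.1 (hP.1 hc)).2 hfD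
        apply hswapαβ (insert f P) (S f)
        · exact Finset.insert_subset (hDF hfD) (hP.1.trans Finset.sdiff_subset)
        · rw [Finset.card_insert_of_notMem hfP, hP.2]
          have := hm1 f hfD; omega
        · exact (Finset.mem_filter.1 hf).2
        · intro g hg hmem
          rcases Finset.mem_insert.1 hmem with h | h
          · simp only [hS_def]; exact Finset.mem_filter.2 ⟨hg, h⟩
          · exact absurd (hηD g hg) (Finset.mem_sdiff.1 (hP.1 h)).2
    · apply mul_nonneg (by positivity)
      apply Finset.sum_nonneg; intro f hf
      apply Finset.sum_nonneg; intro f' hf'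
      apply Finset.sum_nonneg; intro g hg
      have h0 := hswapαβ {f'} {g}
        (Finset.singleton_subset_iff.2 (Finset.mem_sdiff.1 hf').1)
        (by simp) (by simpa using ht)
        (fun g0 hg0 hmem => by
          exfalso
          rw [Finset.mem_singleton] at hmem
          exact (Finset.mem_sdiff.1 hf').2 (hmem ▸ hηD g0 hg0))
      simpa using h0
  set νs : ℕ := ∑ f ∈ Ds, ((S f).card - 1) with hνs_def
  set νb : ℕ := ∑ f ∈ Db, (S f).card with hνb_def
  -- evaluation of the small swaps
  have hsmall : ∀ f ∈ Ds,
      w f * ∑ P ∈ (F \ D).powersetCard ((S f).card - 1),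
        ((∑ g ∈ S f, α1 g) + ∑ u ∈ insert f P, β1 u)
      = (∑ g ∈ S f, α1 g) + β1 f
        + ∑ u ∈ F \ D, (((S f).card - 1 : ℕ) : ℝ) / (Z : ℝ) * β1 u := by
    intro f hf
    rw [hDs_def] at hf
    have hfD : f ∈ D := (Finset.mem_filter.1 hf).1
    set r : ℕ := (S f).card - 1 with hr_def
    have step1 : ∀ P ∈ (F \ D).powersetCard r,
        (∑ g ∈ S f, α1 g) + ∑ u ∈ insert f P, β1 u
        = ((∑ g ∈ S f, α1 g) + β1 f) + ∑ u ∈ F \ D, (if u ∈ P then β1 u else 0) := by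
      intro P hP
      rw [Finset.mem_powersetCard] at hP
      have hfP : f ∉ P := fun hc => (Finset.mem_sdiff.1 (hP.1 hc)).2 hfD
      rw [Finset.sum_insert hfP]
      have : ∑ u ∈ F \ D, (if u ∈ P then β1 u else 0) = ∑ u ∈ P, β1 u := by
        rw [Finset.sum_ite_mem, Finset.inter_eq_right.2 hP.1]
      rw [this]; ring
    rw [Finset.sum_congr rfl step1, Finset.sum_add_distrib, Finset.sum_const,
      Finset.card_powersetCard, hZcard]
    have step2 : ∑ P ∈ (F \ D).powersetCard r, ∑ u ∈ F \ D, (if u ∈ P then β1 u else 0)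
        = ∑ u ∈ F \ D, ((((F \ D).powersetCard r).filter (fun P => u ∈ P)).card : ℝ) * β1 u := by
      rw [Finset.sum_comm]
      apply Finset.sum_congr rfl
      intro u hu
      rw [← Finset.sum_filter, Finset.sum_const, nsmul_eq_mul]
    rw [step2, mul_add, Finset.mul_sum]
    have step3 : ∀ u ∈ F \ D,
        w f * (((((F \ D).powersetCard r).filter (fun P => u ∈ P)).card : ℝ) * β1 u)
        = ((r : ℕ) : ℝ) / (Z : ℝ) * β1 u := by
      intro u hu
      rcases Nat.eq_zero_or_pos r with hr0 | hrpos
      · rw [hr0]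
        simp [Finset.powersetCard_zero, Finset.filter_singleton]
      · obtain ⟨r', hr'⟩ : ∃ r', r = r' + 1 := ⟨r - 1, by omega⟩
        rw [hr', count_powersetCard_mem (F \ D) u hu r', hZcard]
        have hwf : w f = ((Z.choose (r' + 1) : ℕ) : ℝ)⁻¹ := by
          simp only [hw_def]
          rw [← hr_def, hr']
        rw [hwf, ← mul_assoc, choose_ratio Z r' (by rw [← hr']; exact hmZ f hfD)]
        push_cast
        ring
    have hwN : ((Z.choose r : ℕ) : ℝ) * w f = 1 := by
      simp only [hw_def]
      rw [← hr_def]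
      exact mul_inv_cancel₀ (hNne f hfD)
    rw [Finset.sum_congr rfl step3, nsmul_eq_mul, ← mul_assoc,
      mul_comm (w f) ((Z.choose r : ℕ) : ℝ), hwN, one_mul]
  -- evaluation of the big swaps
  have hbig : ∀ f ∈ Db, ∑ f' ∈ F \ D, ∑ g ∈ S f, (α1 g + β1 f')
      = (Z : ℝ) * (∑ g ∈ S f, α1 g) + ∑ f' ∈ F \ D, (((S f).card : ℕ) : ℝ) * β1 f' := by
    intro f hf
    have h1 : ∀ f' ∈ F \ D, ∑ g ∈ S f, (α1 g + β1 f')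
        = (∑ g ∈ S f, α1 g) + (((S f).card : ℕ) : ℝ) * β1 f' := by
      intro f' _
      rw [Finset.sum_add_distrib, Finset.sum_const, nsmul_eq_mul]
    rw [Finset.sum_congr rfl h1, Finset.sum_add_distrib, Finset.sum_const, nsmul_eq_mul, hZcard]
  -- the coefficient aggregation lemma
  have hagg : ∀ (c : V → ℕ) (E : Finset V), ∑ f ∈ E, ∑ u ∈ F \ D, ((c f : ℕ) : ℝ) / (Z : ℝ) * β1 u
      = (((∑ f ∈ E, c f : ℕ) : ℝ) / (Z : ℝ)) * ∑ u ∈ F \ D, β1 u := by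
    intro c E
    rw [Finset.sum_comm, Finset.mul_sum]
    apply Finset.sum_congr rfl
    intro u _
    rw [← Finset.sum_mul, ← Finset.sum_div, Nat.cast_sum]
  have hDb0 : Z = 0 → Db = ∅ := by
    intro hZ0
    apply Finset.eq_empty_of_forall_notMem
    intro f hf
    rw [hDb_def] at hf
    have h1 := (Finset.mem_filter.1 hf).2
    have h2 := hmZ f ((Finset.mem_filter.1 hf).1)
    omega
  have hTeval : T = (kmed Fstar hFstar - kmed F hF) + ∑ f ∈ Ds, β1 f
      + (((νs + νb : ℕ) : ℝ) / (Z : ℝ)) * ∑ u ∈ F \ D, β1 u := by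
    rw [hT_def, Finset.sum_congr rfl hsmall]
    rw [Finset.sum_add_distrib, Finset.sum_add_distrib]
    rw [hagg (fun f => (S f).card - 1) Ds, ← hνs_def]
    have hαpart : ∑ f ∈ Ds, (∑ g ∈ S f, α1 g) + (Z:ℝ)⁻¹ * ∑ f ∈ Db, ∑ f' ∈ F \ D, ∑ g ∈ S f, (α1 g + β1 f')
        = (kmed Fstar hFstar - kmed F hF) + ((νb : ℝ) / (Z : ℝ)) * ∑ u ∈ F \ D, β1 u := by
      rcases Nat.eq_zero_or_pos Z with hZ0 | hZpos
      · have hFD : F \ D = ∅ := Finset.card_eq_zero.1 hZ0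
        have hDbe : Db = ∅ := hDb0 hZ0
        have hDsD2 : Ds = D := by
          rw [hDs_def]
          apply Finset.filter_true_of_mem
          intro f hf
          have h2 := hmZ f hf
          omega
        rw [hDbe, hFD, Finset.sum_empty, Finset.sum_empty, mul_zero, mul_zero,
          add_zero, add_zero, hDsD2, hfib, hαtot]
      · have hZne : ((Z : ℕ) : ℝ) ≠ 0 := Nat.cast_ne_zero.2 (by omega)
        have edist : ∀ f ∈ Db, (Z : ℝ)⁻¹ * ((Z : ℝ) * (∑ g ∈ S f, α1 g)
              + ∑ f' ∈ F \ D, (((S f).card : ℕ) : ℝ) * β1 f')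
            = (∑ g ∈ S f, α1 g)
              + ∑ f' ∈ F \ D, (((S f).card : ℕ) : ℝ) / (Z : ℝ) * β1 f' := by
          intro f _
          rw [mul_add, ← mul_assoc, inv_mul_cancel₀ hZne, one_mul, Finset.mul_sum]
          congr 1
          exact Finset.sum_congr rfl fun u _ => by ring
        rw [Finset.sum_congr rfl hbig, Finset.mul_sum, Finset.sum_congr rfl edist,
          Finset.sum_add_distrib, hagg (fun f => (S f).card) Db, ← hνb_def]
        have e3 : ∑ f ∈ Ds, (∑ g ∈ S f, α1 g) + ∑ f ∈ Db, (∑ g ∈ S f, α1 g)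
            = kmed Fstar hFstar - kmed F hF := by
          rw [hDs_def, hDb_def, Finset.sum_filter_add_sum_filter_not, hfib, hαtot]
        linarith
    have hsplit : (((νs + νb : ℕ) : ℝ) / (Z : ℝ)) * ∑ u ∈ F \ D, β1 u
        = ((νs : ℝ) / (Z : ℝ)) * ∑ u ∈ F \ D, β1 u
          + ((νb : ℝ) / (Z : ℝ)) * ∑ u ∈ F \ D, β1 u := by
      push_cast
      ring
    linarith [hαpart, hsplit]
  -- final bounding
  have ht' : (1 : ℝ) ≤ (t : ℝ) := by exact_mod_cast ht
  have htpos : (0 : ℝ) < (t : ℝ) := by linarith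
  have hsn1 : 0 ≤ ∑ f ∈ Ds, β1 f := Finset.sum_nonneg fun f _ => hβ1nonneg f
  have hsn2 : 0 ≤ ∑ u ∈ F \ D, β1 u := Finset.sum_nonneg fun u _ => hβ1nonneg u
  have hdisj : Disjoint Ds (F \ D) := by
    rw [Finset.disjoint_left]
    intro x hx hy
    exact (Finset.mem_sdiff.1 hy).2 (hDsD hx)
  have hsub : ∑ f ∈ Ds, β1 f + ∑ u ∈ F \ D, β1 u ≤ 2 * kmed Fstar hFstar := by
    rw [← hβtot, ← Finset.sum_union hdisj]
    apply Finset.sum_le_sum_of_subset_of_nonneg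
    · exact Finset.union_subset (hDsD.trans hDF) Finset.sdiff_subset
    · intro u _ _
      exact hβ1nonneg u
  have hcoef : (((νs + νb : ℕ) : ℝ) / (Z : ℝ)) * ∑ u ∈ F \ D, β1 u
      ≤ (1 + 1 / (t : ℝ)) * ∑ u ∈ F \ D, β1 u := by
    rcases Nat.eq_zero_or_pos Z with hZ0 | hZpos
    · have hFD : F \ D = ∅ := Finset.card_eq_zero.1 hZ0
      rw [hFD]
      simp
    · apply mul_le_mul_of_nonneg_right _ hsn2
      have hZR : (0 : ℝ) < (Z : ℝ) := by exact_mod_cast hZpos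
      -- nat facts
      have nf1 : νs + ∑ f ∈ Db, ((S f).card - 1) = Z := by
        rw [hνs_def, hDs_def, hDb_def, Finset.sum_filter_add_sum_filter_not, hZsum]
      have nf2 : νb = ∑ f ∈ Db, ((S f).card - 1) + Db.card := by
        rw [hνb_def]
        have : ∀ f ∈ Db, (S f).card = (S f).card - 1 + 1 := by
          intro f hf
          have := hm1 f (hDbD hf)
          omega
        rw [Finset.sum_congr rfl this, Finset.sum_add_distrib, Finset.sum_const,
          smul_eq_mul, mul_one]
      have nf3 : Db.card * t ≤ ∑ f ∈ Db, ((S f).card - 1) := by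
        have : ∀ f ∈ Db, t ≤ (S f).card - 1 := by
          intro f hf
          rw [hDb_def] at hf
          have := (Finset.mem_filter.1 hf).2
          omega
        have h := Finset.card_nsmul_le_sum Db (fun f => (S f).card - 1) t this
        simpa [smul_eq_mul] using h
      have nfm : νs + νb = Z + Db.card := by omega
      have nfB : Db.card * t ≤ Z := by omega
      have hBZ : (Db.card : ℝ) * (t : ℝ) ≤ (Z : ℝ) := by exact_mod_cast nfB
      have h1 : (Db.card : ℝ) ≤ (Z : ℝ) / (t : ℝ) := (le_div_iff₀ htpos).2 hBZ
      have h2 : ((νs + νb : ℕ) : ℝ) = (Z : ℝ) + (Db.card : ℝ) := by exact_mod_cast nfm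
      rw [h2, div_le_iff₀ hZR]
      have h3 : (1 + 1 / (t : ℝ)) * (Z : ℝ) = (Z : ℝ) + (Z : ℝ) / (t : ℝ) := by ring
      linarith
  have hKs : 0 ≤ kmed Fstar hFstar := Finset.sum_nonneg fun j _ => distSet_nonneg _ _ _
  have htinv : 0 < 1 / (t : ℝ) := by positivity
  have hfinal : ∑ f ∈ Ds, β1 f + (((νs + νb : ℕ) : ℝ) / (Z : ℝ)) * ∑ u ∈ F \ D, β1 u
      ≤ (1 + 1 / (t : ℝ)) * (2 * kmed Fstar hFstar) := by
    have h4 : (1 + 1 / (t : ℝ)) * (∑ f ∈ Ds, β1 f + ∑ u ∈ F \ D, β1 u)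
        ≤ (1 + 1 / (t : ℝ)) * (2 * kmed Fstar hFstar) :=
      mul_le_mul_of_nonneg_left hsub (by positivity)
    nlinarith [hsn1, hcoef]
  have hexp : (1 + 1 / (t : ℝ)) * (2 * kmed Fstar hFstar)
      = 2 * kmed Fstar hFstar + 2 / (t : ℝ) * kmed Fstar hFstar := by
    field_simp
  have hexp2 : (3 + 2 / (t : ℝ)) * kmed Fstar hFstar
      = 3 * kmed Fstar hFstar + 2 / (t : ℝ) * kmed Fstar hFstar := by ring
  rw [hTeval] at hTnonneg
  linarith
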